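/- Let G be a temporal graph, k ≥ 1 an integer, and ts a start time. Suppose te < te' are end times such that C_[ts,te] and C_[ts,te'] are both nonempty with TTI(C_[ts,te]) = [ts,te] and TTI(C_[ts,te']) = [ts,te']. Then C_[ts,te] is a proper subset of C_[ts,te']; in particular, distinct tightest-time-interval end times for the same start time yield distinct temporal k-cores. -/

import Mathlib

variable {V : Type*} [Fintype V]

/-- A vertex set `S` is `k`-dense in `G` if every vertex of `S` has
at least `k` neighbors of `G` lying in `S`. -/
def KDense (G : SimpleGraph V) (k : ℕ) (S : Set V) : Prop :=
  ∀ v ∈ S, k ≤ (S ∩ G.neighborSet v).ncard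

/-- The `k`-core of `G`: the union of all `k`-dense vertex sets. -/
def kCore (G : SimpleGraph V) (k : ℕ) : Set V :=
  ⋃₀ {S | KDense G k S}

/-- A temporal graph on a vertex set `V`: a finite set of temporal edges
`(u, v, t)` with `u ≠ v` and integer timestamp `t`. -/
structure TemporalGraph (V : Type*) where
  E : Finset (V × V × ℤ)
  ne : ∀ e ∈ E, e.1 ≠ e.2.1

/-- The projected (snapshot) graph of `G` over the time window `[ts, te]`. -/
def TemporalGraph.proj (G : TemporalGraph V) (ts te : ℤ) : SimpleGraph V where
  Adj u v := ∃ t, ts ≤ t ∧ t ≤ te ∧ ((u, v, t) ∈ G.E ∨ (v, u, t) ∈ G.E)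
  symm := by
    constructor
    rintro u v ⟨t, h1, h2, h3⟩
    exact ⟨t, h1, h2, h3.symm⟩
  loopless := by
    constructor
    rintro u ⟨t, h1, h2, h3⟩
    rcases h3 with h | h <;> exact G.ne _ h rfl

/-- The temporal `k`-core of the window `[ts, te]`: all temporal edges with
timestamp in `[ts, te]` whose both endpoints lie in the `k`-core of the
projected graph `G_[ts,te]`. -/
def TemporalGraph.tCore (G : TemporalGraph V) (k : ℕ) (ts te : ℤ) :
    Set (V × V × ℤ) :=
  {e | e ∈ G.E ∧ ts ≤ e.2.2 ∧ e.2.2 ≤ te ∧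
    e.1 ∈ kCore (G.proj ts te) k ∧ e.2.1 ∈ kCore (G.proj ts te) k}

/-- `[a, b]` is the tightest time interval of the edge set `C`:
`a` and `b` are the minimum and maximum timestamps of the edges in `C`. -/
def IsTTI (C : Set (V × V × ℤ)) (a b : ℤ) : Prop :=
  IsLeast {t | ∃ e ∈ C, e.2.2 = t} a ∧ IsGreatest {t | ∃ e ∈ C, e.2.2 = t} b

/-! Widening the window only adds edges to the projected graph, so the `k`-core and with it the
temporal `k`-core can only grow. Inclusion is strict because an edge of the larger core carrying
its latest timestamp `te'` lies outside the window `[ts, te]`. -/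

lemma kCore_mono {G H : SimpleGraph V} (k : ℕ) (hGH : G ≤ H) :
    kCore G k ⊆ kCore H k := by
  rintro v ⟨S, hS, hv⟩
  refine ⟨S, fun w hw => (hS w hw).trans (Set.ncard_le_ncard ?_ (Set.toFinite _)), hv⟩
  exact Set.inter_subset_inter_right _ fun x hx => hGH hx

namespace TemporalGraph

lemma proj_mono {W : Type*} (G : TemporalGraph W) {ts ts' te te' : ℤ} (hs : ts' ≤ ts)
    (he : te ≤ te') : G.proj ts te ≤ G.proj ts' te' := by
  rintro u v ⟨t, hts, hte, huv⟩
  exact ⟨t, hs.trans hts, hte.trans he, huv⟩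

lemma tCore_mono (G : TemporalGraph V) (k : ℕ) {ts ts' te te' : ℤ} (hs : ts' ≤ ts)
    (he : te ≤ te') : G.tCore k ts te ⊆ G.tCore k ts' te' := by
  have hcore := kCore_mono k (G.proj_mono hs he)
  rintro e ⟨hE, hts, hte, hu, hv⟩
  exact ⟨hE, hs.trans hts, hte.trans he, hcore hu, hcore hv⟩

end TemporalGraph

theorem tCore_ssubset_of_TTI_end_lt_general (G : TemporalGraph V) (k : ℕ)
    (ts te te' : ℤ) (hlt : te < te')
    (hT2 : IsTTI (G.tCore k ts te') ts te') :
    G.tCore k ts te ⊂ G.tCore k ts te' ∧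
    G.tCore k ts te ≠ G.tCore k ts te' := by
  have hsub : G.tCore k ts te ⊆ G.tCore k ts te' := G.tCore_mono k le_rfl hlt.le
  obtain ⟨e, he, hlast⟩ := hT2.2.1
  have hnew : e ∉ G.tCore k ts te := fun ⟨_, _, hle, _⟩ => hlt.not_ge (hlast ▸ hle)
  have hssub : G.tCore k ts te ⊂ G.tCore k ts te' :=
    (Set.ssubset_iff_of_subset hsub).2 ⟨e, he, hnew⟩
  exact ⟨hssub, hssub.ne⟩

theorem tCore_ssubset_of_TTI_end_lt (G : TemporalGraph V) (k : ℕ)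
    (hk : 1 ≤ k) (ts te te' : ℤ) (hlt : te < te')
    (h1 : (G.tCore k ts te).Nonempty) (h2 : (G.tCore k ts te').Nonempty)
    (hT1 : IsTTI (G.tCore k ts te) ts te)
    (hT2 : IsTTI (G.tCore k ts te') ts te') :
    G.tCore k ts te ⊂ G.tCore k ts te' ∧
    G.tCore k ts te ≠ G.tCore k ts te' :=
  tCore_ssubset_of_TTI_end_lt_general G k ts te te' hlt hT2
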